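/- The supremum over a ≥ 2 of the function a ↦ (1/a)·( log 2 + (1/2)[a log a − (a−2) log(a−2)] ) equals (1/2) log 5, and it is attained at the unique maximiser a* = 5/2 (with the convention 0 log 0 = 0 at a = 2). -/
import Mathlib


/-- The entropy per step of directed self-avoiding paths crossing a square block
diagonally: `κ(a,1) = (1/a)·(log 2 + (1/2)[a log a − (a−2) log(a−2)])`
(with the convention `0 log 0 = 0`, automatic since `Real.log 0 = 0`). -/
noncomputable def kdiag (a : ℝ) : ℝ :=
  (1 / a) * (Real.log 2 + (1 / 2) * (a * Real.log a - (a - 2) * Real.log (a - 2)))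

lemma kdiag_val : kdiag (5 / 2) = (1 / 2) * Real.log 5 := by
  have h52 : Real.log ((5 : ℝ) / 2) = Real.log 5 - Real.log 2 := by
    rw [Real.log_div (by norm_num) (by norm_num)]
  have e : ((5 : ℝ) / 2 - 2) = 2⁻¹ := by norm_num
  have h12 : Real.log ((5 : ℝ) / 2 - 2) = -Real.log 2 := by
    rw [e, Real.log_inv]
  unfold kdiag
  rw [h52, h12]
  ring

lemma kdiag_lt (a : ℝ) (ha : 2 ≤ a) (hne : a ≠ 5 / 2) :
    kdiag a < (1 / 2) * Real.log 5 := by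
  rcases eq_or_lt_of_le ha with h2 | h2
  · -- a = 2
    subst h2
    have hk : kdiag 2 = Real.log 2 := by
      unfold kdiag; norm_num; ring
    have h45 : Real.log 4 < Real.log 5 := Real.log_lt_log (by norm_num) (by norm_num)
    have h4 : Real.log 4 = 2 * Real.log 2 := by
      rw [show (4 : ℝ) = 2 ^ 2 by norm_num, Real.log_pow]; push_cast; ring
    rw [hk]; linarith
  · have ha0 : (0 : ℝ) < a := by linarith
    have hb0 : (0 : ℝ) < a - 2 := by linarith
    set La := Real.log a with hLa
    set Lb := Real.log (a - 2) with hLb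
    set L2 := Real.log 2 with hL2
    set L5 := Real.log 5 with hL5
    -- first tangent inequality
    have h1 : Real.log (a / (5 * (a - 2))) ≤ a / (5 * (a - 2)) - 1 :=
      Real.log_le_sub_one_of_pos (by positivity)
    have e1 : Real.log (a / (5 * (a - 2))) = La - (L5 + Lb) := by
      rw [Real.log_div ha0.ne' (by positivity), Real.log_mul (by norm_num) hb0.ne']
    rw [e1] at h1
    have A : (a - 2) * (La - (L5 + Lb)) ≤ (a - 2) * (a / (5 * (a - 2)) - 1) :=
      mul_le_mul_of_nonneg_left h1 hb0.le
    have hd : (a - 2) * (a / (5 * (a - 2)) - 1) = a / 5 - (a - 2) := by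
      field_simp
    rw [hd] at A
    -- second tangent inequality, strict
    have hne1 : 2 * a / 5 ≠ 1 := by
      intro h; apply hne; linarith [(div_eq_one_iff_eq (by norm_num : (5:ℝ) ≠ 0)).mp h]
    have h2' : Real.log (2 * a / 5) < 2 * a / 5 - 1 :=
      Real.log_lt_sub_one_of_pos (by positivity) hne1
    have e2 : Real.log (2 * a / 5) = L2 + La - L5 := by
      rw [Real.log_div (by positivity) (by norm_num),
        Real.log_mul (by norm_num) ha0.ne']
    rw [e2] at h2'
    have A' : a * La - 2 * La - a * L5 + 2 * L5 - a * Lb + 2 * Lb ≤ a / 5 - (a - 2) := by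
      nlinarith [A]
    have key : L2 + (1 / 2) * (a * La - (a - 2) * Lb) < (1 / 2) * L5 * a := by
      nlinarith [A', h2']
    have : kdiag a = (L2 + (1 / 2) * (a * La - (a - 2) * Lb)) / a := by
      unfold kdiag; rw [one_div_mul_eq_div]
    rw [this, div_lt_iff₀ ha0]
    linarith

lemma kdiag_le (a : ℝ) (ha : 2 ≤ a) : kdiag a ≤ (1 / 2) * Real.log 5 := by
  by_cases h : a = 5 / 2
  · rw [h, kdiag_val]
  · exact (kdiag_lt a ha h).le

/-- `sup_{a ≥ 2} κ(a,1) = (1/2) log 5`, attained at the unique maximiser `a* = 5/2`. -/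
theorem stmt4 :
    IsGreatest (kdiag '' Set.Ici (2 : ℝ)) ((1 / 2) * Real.log 5) ∧
    kdiag (5 / 2) = (1 / 2) * Real.log 5 ∧
    ∀ a : ℝ, 2 ≤ a → kdiag a = (1 / 2) * Real.log 5 → a = 5 / 2 := by
  refine ⟨⟨⟨5 / 2, by norm_num, kdiag_val⟩, ?_⟩, kdiag_val, ?_⟩
  · rintro x ⟨a, ha, rfl⟩
    exact kdiag_le a ha
  · intro a ha heq
    by_contra h
    exact absurd heq (ne_of_lt (kdiag_lt a ha h))
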